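/- For every smooth function f : ℝ³∖{0} → ℂ and every x ≠ 0, one has R₁(L₁f)(x) + R₂(L₂f)(x) + R₃(L₃f)(x) = 0; that is, the central element RL of the enveloping algebra acts as the zero operator on smooth functions on ℝ³∖{0}. -/

import Mathlib

noncomputable section

/-- Euclidean 3-space. -/
abbrev E3 : Type := EuclideanSpace ℝ (Fin 3)

/-- The `i`-th partial derivative of a complex-valued function on `E3`. -/
def pd (i : Fin 3) (f : E3 → ℂ) (x : E3) : ℂ :=
  fderiv ℝ f x (EuclideanSpace.single i 1)

/-- Angular momentum operator `L₁ = x₂∂₃ − x₃∂₂` (0-indexed coordinates). -/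
def L1 (f : E3 → ℂ) (x : E3) : ℂ := (x 1 : ℂ) * pd 2 f x - (x 2 : ℂ) * pd 1 f x

/-- Angular momentum operator `L₂ = x₃∂₁ − x₁∂₃`. -/
def L2 (f : E3 → ℂ) (x : E3) : ℂ := (x 2 : ℂ) * pd 0 f x - (x 0 : ℂ) * pd 2 f x

/-- Angular momentum operator `L₃ = x₁∂₂ − x₂∂₁`. -/
def L3 (f : E3 → ℂ) (x : E3) : ℂ := (x 0 : ℂ) * pd 1 f x - (x 1 : ℂ) * pd 0 f x

/-- Runge–Lenz operator `R₁ = i(L₃∂₂ − L₂∂₃ − ∂₁ + γx₁/r)`. -/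
def R1 (γ : ℝ) (f : E3 → ℂ) (x : E3) : ℂ :=
  Complex.I * (L3 (pd 1 f) x - L2 (pd 2 f) x - pd 0 f x + ((γ * x 0 / ‖x‖ : ℝ) : ℂ) * f x)

/-- Runge–Lenz operator `R₂ = i(L₁∂₃ − L₃∂₁ − ∂₂ + γx₂/r)`. -/
def R2 (γ : ℝ) (f : E3 → ℂ) (x : E3) : ℂ :=
  Complex.I * (L1 (pd 2 f) x - L3 (pd 0 f) x - pd 1 f x + ((γ * x 1 / ‖x‖ : ℝ) : ℂ) * f x)

/-- Runge–Lenz operator `R₃ = i(L₂∂₁ − L₁∂₂ − ∂₃ + γx₃/r)`. -/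
def R3 (γ : ℝ) (f : E3 → ℂ) (x : E3) : ℂ :=
  Complex.I * (L2 (pd 0 f) x - L1 (pd 1 f) x - pd 2 f x + ((γ * x 2 / ‖x‖ : ℝ) : ℂ) * f x)

/-! ### Auxiliary lemmas -/

lemma contDiffAt_pd {g : E3 → ℂ} {x : E3} (hg : ContDiffAt ℝ (⊤ : ℕ∞) g x) (i : Fin 3) :
    ContDiffAt ℝ (⊤ : ℕ∞) (pd i g) x :=
  (hg.fderiv_right (by simp)).clm_apply contDiffAt_const

lemma diffAt_pd {g : E3 → ℂ} {x : E3} (hg : ContDiffAt ℝ (⊤ : ℕ∞) g x) (i : Fin 3) :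
    DifferentiableAt ℝ (pd i g) x :=
  (contDiffAt_pd hg i).differentiableAt (by simp)

lemma pd_congr {g h : E3 → ℂ} {x : E3} (hgh : g =ᶠ[nhds x] h) (i : Fin 3) :
    pd i g x = pd i h x := by
  unfold pd; rw [hgh.fderiv_eq]

lemma pd_comm {g : E3 → ℂ} {x : E3} (hg : ContDiffAt ℝ (⊤ : ℕ∞) g x) (i j : Fin 3) :
    pd i (pd j g) x = pd j (pd i g) x := by
  have hd : DifferentiableAt ℝ (fderiv ℝ g) x :=
    (hg.fderiv_right (m := (⊤ : ℕ∞)) (by simp)).differentiableAt (by simp)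
  have key : ∀ a b : Fin 3, pd a (pd b g) x
      = fderiv ℝ (fderiv ℝ g) x (EuclideanSpace.single a 1) (EuclideanSpace.single b 1) := by
    intro a b
    have h1 : pd b g = fun y => (fderiv ℝ g y) (EuclideanSpace.single b 1) := rfl
    rw [pd, h1, fderiv_clm_apply hd (differentiableAt_const _)]
    simp
  rw [key, key, (hg.isSymmSndFDerivAt (by rw [minSmoothness_of_isRCLikeNormedField]; exact WithTop.coe_le_coe.mpr le_top)).eq]

lemma coord_eq (a : Fin 3) :
    (fun y : E3 => ((y a : ℝ) : ℂ))
      = fun y => (Complex.ofRealCLM.comp (EuclideanSpace.proj a (𝕜 := ℝ))) y := rfl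

lemma diffAt_coord (a : Fin 3) (x : E3) :
    DifferentiableAt ℝ (fun y : E3 => ((y a : ℝ) : ℂ)) x := by
  rw [coord_eq]
  exact (Complex.ofRealCLM.comp (EuclideanSpace.proj a (𝕜 := ℝ))).differentiableAt

lemma pd_coord (a i : Fin 3) (x : E3) :
    pd i (fun y : E3 => ((y a : ℝ) : ℂ)) x = if a = i then 1 else 0 := by
  rw [pd, coord_eq]
  rw [show (fun y : E3 => (Complex.ofRealCLM.comp (EuclideanSpace.proj a (𝕜 := ℝ))) y)
      = ⇑(Complex.ofRealCLM.comp (EuclideanSpace.proj a (𝕜 := ℝ))) from rfl,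
    (Complex.ofRealCLM.comp (EuclideanSpace.proj a (𝕜 := ℝ))).fderiv]
  simp [EuclideanSpace.single_apply]
  split <;> simp

lemma pd_coord_mul {g : E3 → ℂ} {x : E3} (hg : DifferentiableAt ℝ g x) (a i : Fin 3) :
    pd i (fun y => ((y a : ℝ) : ℂ) * g y) x
      = (if a = i then 1 else 0) * g x + ((x a : ℝ) : ℂ) * pd i g x := by
  rw [pd, fderiv_fun_mul (diffAt_coord a x) hg]
  have h := pd_coord a i x
  rw [pd] at h
  simp only [ContinuousLinearMap.add_apply, ContinuousLinearMap.smul_apply, smul_eq_mul, h]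
  unfold pd
  ring

lemma pd_sub {g h : E3 → ℂ} {x : E3} (hg : DifferentiableAt ℝ g x)
    (hh : DifferentiableAt ℝ h x) (i : Fin 3) :
    pd i (fun y => g y - h y) x = pd i g x - pd i h x := by
  rw [pd, fderiv_fun_sub hg hh]; rfl

lemma pd_add {g h : E3 → ℂ} {x : E3} (hg : DifferentiableAt ℝ g x)
    (hh : DifferentiableAt ℝ h x) (i : Fin 3) :
    pd i (fun y => g y + h y) x = pd i g x + pd i h x := by
  rw [pd, fderiv_fun_add hg hh]; rfl

lemma pd_const_mul {g : E3 → ℂ} {x : E3} (hg : DifferentiableAt ℝ g x) (c : ℂ) (i : Fin 3) :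
    pd i (fun y => c * g y) x = c * pd i g x := by
  rw [pd, fderiv_const_mul hg]; rfl

/-- First derivative of an `L`-type combination. -/
lemma pd_L {f : E3 → ℂ} (hf : ContDiffOn ℝ (⊤ : ℕ∞) f {x : E3 | x ≠ 0})
    {x : E3} (hx : x ≠ 0) (a b c d i : Fin 3) :
    pd i (fun y => ((y a : ℝ) : ℂ) * pd b f y - ((y c : ℝ) : ℂ) * pd d f y) x
      = ((if a = i then 1 else 0) * pd b f x + ((x a : ℝ) : ℂ) * pd i (pd b f) x)
        - ((if c = i then 1 else 0) * pd d f x + ((x c : ℝ) : ℂ) * pd i (pd d f) x) := by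
  have hO : IsOpen {x : E3 | x ≠ 0} := isOpen_compl_singleton
  have hfx : ContDiffAt ℝ (⊤ : ℕ∞) f x := hf.contDiffAt (hO.mem_nhds hx)
  rw [pd_sub (show DifferentiableAt ℝ (fun y => ((y a : ℝ) : ℂ) * pd b f y) x from
      (diffAt_coord a x).mul (diffAt_pd hfx b))
    (show DifferentiableAt ℝ (fun y => ((y c : ℝ) : ℂ) * pd d f y) x from
      (diffAt_coord c x).mul (diffAt_pd hfx d)),
    pd_coord_mul (diffAt_pd hfx b), pd_coord_mul (diffAt_pd hfx d)]

/-- Second derivative of an `L`-type combination. -/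
lemma pd_pd_L {f : E3 → ℂ} (hf : ContDiffOn ℝ (⊤ : ℕ∞) f {x : E3 | x ≠ 0})
    {x : E3} (hx : x ≠ 0) (a b c d i j : Fin 3) :
    pd j (pd i (fun y => ((y a : ℝ) : ℂ) * pd b f y - ((y c : ℝ) : ℂ) * pd d f y)) x
      = ((if a = i then 1 else 0) * pd j (pd b f) x
          + (if a = j then 1 else 0) * pd i (pd b f) x
          + ((x a : ℝ) : ℂ) * pd j (pd i (pd b f)) x)
        - ((if c = i then 1 else 0) * pd j (pd d f) x
          + (if c = j then 1 else 0) * pd i (pd d f) x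
          + ((x c : ℝ) : ℂ) * pd j (pd i (pd d f)) x) := by
  have hO : IsOpen {x : E3 | x ≠ 0} := isOpen_compl_singleton
  have hfx : ContDiffAt ℝ (⊤ : ℕ∞) f x := hf.contDiffAt (hO.mem_nhds hx)
  have heq : pd i (fun y => ((y a : ℝ) : ℂ) * pd b f y - ((y c : ℝ) : ℂ) * pd d f y)
      =ᶠ[nhds x] fun y =>
        ((if a = i then (1:ℂ) else 0) * pd b f y + ((y a : ℝ) : ℂ) * pd i (pd b f) y)
        - ((if c = i then (1:ℂ) else 0) * pd d f y + ((y c : ℝ) : ℂ) * pd i (pd d f) y) := by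
    filter_upwards [hO.mem_nhds hx] with y hy
    exact pd_L hf hy a b c d i
  rw [pd_congr heq j]
  have h2b : ContDiffAt ℝ (⊤ : ℕ∞) (pd b f) x := contDiffAt_pd hfx b
  have h2d : ContDiffAt ℝ (⊤ : ℕ∞) (pd d f) x := contDiffAt_pd hfx d
  have D1 : DifferentiableAt ℝ (fun y => (if a = i then (1:ℂ) else 0) * pd b f y
      + ((y a : ℝ) : ℂ) * pd i (pd b f) y) x :=
    ((diffAt_pd hfx b).const_mul _).add ((diffAt_coord a x).mul (diffAt_pd h2b i))
  have D2 : DifferentiableAt ℝ (fun y => (if c = i then (1:ℂ) else 0) * pd d f y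
      + ((y c : ℝ) : ℂ) * pd i (pd d f) y) x :=
    ((diffAt_pd hfx d).const_mul _).add ((diffAt_coord c x).mul (diffAt_pd h2d i))
  rw [pd_sub D1 D2 j,
    pd_add ((diffAt_pd hfx b).const_mul _) (show DifferentiableAt ℝ
      (fun y => ((y a : ℝ) : ℂ) * pd i (pd b f) y) x from
      (diffAt_coord a x).mul (diffAt_pd h2b i)) j,
    pd_add ((diffAt_pd hfx d).const_mul _) (show DifferentiableAt ℝ
      (fun y => ((y c : ℝ) : ℂ) * pd i (pd d f) y) x from
      (diffAt_coord c x).mul (diffAt_pd h2d i)) j,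
    pd_const_mul (diffAt_pd hfx b) _ j, pd_const_mul (diffAt_pd hfx d) _ j,
    pd_coord_mul (diffAt_pd h2b i) a j, pd_coord_mul (diffAt_pd h2d i) c j]
  ring

/-- The central element `RL = R₁L₁ + R₂L₂ + R₃L₃` acts as the zero operator on smooth
functions on `ℝ³ ∖ {0}`. -/
theorem RL_acts_as_zero
    (γ : ℝ) (hγ : 0 < γ)
    (f : E3 → ℂ) (hf : ContDiffOn ℝ (⊤ : ℕ∞) f {x : E3 | x ≠ 0})
    (x : E3) (hx : x ≠ 0) :
    R1 γ (L1 f) x + R2 γ (L2 f) x + R3 γ (L3 f) x = 0 := by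
  have hO : IsOpen {x : E3 | x ≠ 0} := isOpen_compl_singleton
  have hfx : ContDiffAt ℝ (⊤ : ℕ∞) f x := hf.contDiffAt (hO.mem_nhds hx)
  have S2 : ∀ i j : Fin 3, pd i (pd j f) x = pd j (pd i f) x := pd_comm hfx
  have T_out : ∀ i j k : Fin 3, pd i (pd j (pd k f)) x = pd j (pd i (pd k f)) x :=
    fun i j k => pd_comm (contDiffAt_pd hfx k) i j
  have T_in : ∀ i j k : Fin 3, pd i (pd j (pd k f)) x = pd i (pd k (pd j f)) x := by
    intro i j k
    refine pd_congr ?_ i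
    filter_upwards [hO.mem_nhds hx] with y hy
    exact pd_comm (hf.contDiffAt (hO.mem_nhds hy)) j k
  have e1 : L1 f = fun y => ((y 1 : ℝ) : ℂ) * pd 2 f y - ((y 2 : ℝ) : ℂ) * pd 1 f y := rfl
  have e2 : L2 f = fun y => ((y 2 : ℝ) : ℂ) * pd 0 f y - ((y 0 : ℝ) : ℂ) * pd 2 f y := rfl
  have e3 : L3 f = fun y => ((y 0 : ℝ) : ℂ) * pd 1 f y - ((y 1 : ℝ) : ℂ) * pd 0 f y := rfl
  simp only [R1, R2, R3, L1, L2, L3]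
  rw [e1, e2, e3]
  simp only [pd_pd_L hf hx, pd_L hf hx]
  simp only [Fin.reduceEq, reduceIte, one_mul, zero_mul, zero_add, add_zero, mul_zero, mul_one,
    sub_zero, zero_sub]
  rw [show pd 0 (pd 2 (pd 1 f)) x = pd 0 (pd 1 (pd 2 f)) x from T_in 0 2 1]
  rw [show pd 2 (pd 2 (pd 1 f)) x = pd 1 (pd 2 (pd 2 f)) x from (T_in 2 2 1).trans (T_out 2 1 2)]
  rw [show pd 2 (pd 2 (pd 0 f)) x = pd 0 (pd 2 (pd 2 f)) x from (T_in 2 2 0).trans (T_out 2 0 2)]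
  rw [show pd 1 (pd 2 (pd 0 f)) x = pd 0 (pd 1 (pd 2 f)) x from (T_in 1 2 0).trans (T_out 1 0 2)]
  rw [show pd 1 (pd 0 (pd 0 f)) x = pd 0 (pd 0 (pd 1 f)) x from (T_out 1 0 0).trans (T_in 0 1 0)]
  rw [show pd 1 (pd 0 (pd 2 f)) x = pd 0 (pd 1 (pd 2 f)) x from T_out 1 0 2]
  rw [show pd 2 (pd 0 (pd 1 f)) x = pd 0 (pd 1 (pd 2 f)) x from (T_out 2 0 1).trans (T_in 0 2 1)]
  rw [show pd 2 (pd 0 (pd 0 f)) x = pd 0 (pd 0 (pd 2 f)) x from (T_out 2 0 0).trans (T_in 0 2 0)]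
  rw [show pd 2 (pd 1 (pd 1 f)) x = pd 1 (pd 1 (pd 2 f)) x from (T_out 2 1 1).trans (T_in 1 2 1)]
  rw [show pd 2 (pd 1 (pd 0 f)) x = pd 0 (pd 1 (pd 2 f)) x from
    (T_out 2 1 0).trans ((T_in 1 2 0).trans (T_out 1 0 2))]
  rw [show pd 1 (pd 1 (pd 0 f)) x = pd 0 (pd 1 (pd 1 f)) x from (T_in 1 1 0).trans (T_out 1 0 1)]
  rw [show pd 1 (pd 0 f) x = pd 0 (pd 1 f) x from S2 1 0]
  rw [show pd 2 (pd 0 f) x = pd 0 (pd 2 f) x from S2 2 0]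
  rw [show pd 2 (pd 1 f) x = pd 1 (pd 2 f) x from S2 2 1]
  push_cast
  ring
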